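/- arXiv:2105.03823 — 2 statements merged into one kernel-verified Lean document; each statement's English description precedes it below -/
import Mathlib

section
/- For positive definite operators A, B, C on a Hilbert space, R(A,C) ≤ R(A,B)·R(B,C), where R(X,Y) = max{r(X⁻¹Y), r(Y⁻¹X)} and r denotes spectral radius. -/
/-!
For positive definite `a` and positive `b`, the spectral radius of `a⁻¹ b` is the least `t ≥ 0`
with `b ≤ t • a`: writing `a⁻¹ = s * s` with `s = √(a⁻¹)`, the element `a⁻¹ b` has the same
spectral radius as the positive element `s b s`, which is its norm, and `‖s b s‖ ≤ t` means
`s b s ≤ t • s a s`. Hence `R(A, B) ≤ t` iff `B ≤ t • A` and `A ≤ t • B`, and such two-sided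
bounds compose multiplicatively.
-/

set_option synthInstance.maxHeartbeats 400000
set_option maxHeartbeats 800000

open scoped NNReal ENNReal
open ContinuousLinearMap Filter

variable {H : Type*} [NormedAddCommGroup H] [InnerProductSpace ℂ H] [CompleteSpace H]

/-- A bounded operator is positive definite: positive (semi-definite) and invertible. -/
def IsPosDef (A : H →L[ℂ] H) : Prop := A.IsPositive ∧ IsUnit A

/-- `R(A,B) = max {r(A⁻¹B), r(B⁻¹A)}` where `r` is the spectral radius. -/
noncomputable def Rdist (A B : H →L[ℂ] H) : ℝ :=
  max (spectralRadius ℂ (Ring.inverse A * B)).toReal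
    (spectralRadius ℂ (Ring.inverse B * A)).toReal

theorem spectralRadius_mul_comm {𝕜 A : Type*} [NormedField 𝕜] [Ring A] [Algebra 𝕜 A]
    (a b : A) : spectralRadius 𝕜 (a * b) = spectralRadius 𝕜 (b * a) := by
  suffices h : ∀ x y : A, spectralRadius 𝕜 (x * y) ≤ spectralRadius 𝕜 (y * x) from
    le_antisymm (h a b) (h b a)
  intro x y
  refine iSup₂_le fun k hk => ?_
  rcases eq_or_ne k 0 with rfl | hk0
  · simp
  · have hk' : k ∈ spectrum 𝕜 (x * y) \ {0} := ⟨hk, hk0⟩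
    rw [spectrum.nonzero_mul_comm] at hk'
    exact le_iSup₂ (f := fun k (_ : k ∈ spectrum 𝕜 (y * x)) => (‖k‖₊ : ℝ≥0∞)) k hk'.1

namespace CFC

open Ring

variable {A : Type*} [CStarAlgebra A] [PartialOrder A] [StarOrderedRing A]

theorem conjSqrt_le_conjSqrt_iff {c a b : A} (hc : IsStrictlyPositive c) :
    conjSqrt c a ≤ conjSqrt c b ↔ a ≤ b := by
  refine ⟨fun h => ?_, conjSqrt_le_conjSqrt⟩
  simpa only [conjSqrt_ringInverse_conjSqrt c _ hc] using conjSqrt_le_conjSqrt (c := c⁻¹ʳ) h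

theorem spectralRadius_ringInverse_mul_le_iff {a b : A} (ha : IsStrictlyPositive a)
    (hb : 0 ≤ b) {t : ℝ} (ht : 0 ≤ t) :
    (spectralRadius ℂ (a⁻¹ʳ * b)).toReal ≤ t ↔ b ≤ t • a := by
  have hp : 0 ≤ conjSqrt a⁻¹ʳ b := conjugate_nonneg_of_nonneg hb (sqrt_nonneg _)
  have hr : spectralRadius ℂ (a⁻¹ʳ * b) = spectralRadius ℂ (conjSqrt a⁻¹ʳ b) := by
    conv_lhs => rw [← sqrt_mul_sqrt_self a⁻¹ʳ ha.ringInverse.nonneg, mul_assoc,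
      spectralRadius_mul_comm]
    rfl
  rw [hr, (IsSelfAdjoint.of_nonneg hp).toReal_spectralRadius_complex_eq_norm,
    CStarAlgebra.norm_le_iff_le_algebraMap _ ht hp, Algebra.algebraMap_eq_smul_one,
    ← conjSqrt_ringInverse_self a ha, ← map_smul, conjSqrt_le_conjSqrt_iff ha.ringInverse]

end CFC

theorem IsPosDef.isStrictlyPositive {E : Type*} [NormedAddCommGroup E] [InnerProductSpace ℂ E]
    {A : E →L[ℂ] E} (hA : IsPosDef A) : IsStrictlyPositive A :=
  hA.2.isStrictlyPositive ((nonneg_iff_isPositive A).mpr hA.1)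

theorem Rdist_nonneg {E : Type*} [NormedAddCommGroup E] [InnerProductSpace ℂ E]
    (A B : E →L[ℂ] E) : 0 ≤ Rdist A B :=
  le_max_of_le_left ENNReal.toReal_nonneg

theorem Rdist_le_iff {A B : H →L[ℂ] H} (hA : IsPosDef A) (hB : IsPosDef B) {t : ℝ} (ht : 0 ≤ t) :
    Rdist A B ≤ t ↔ B ≤ t • A ∧ A ≤ t • B := by
  rw [Rdist, max_le_iff,
    CFC.spectralRadius_ringInverse_mul_le_iff hA.isStrictlyPositive hB.isStrictlyPositive.nonneg ht,
    CFC.spectralRadius_ringInverse_mul_le_iff hB.isStrictlyPositive hA.isStrictlyPositive.nonneg ht]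

/-- Multiplicative triangle inequality: `R(A,C) ≤ R(A,B) * R(B,C)`. -/
theorem stmt_2 (A B C : H →L[ℂ] H) (hA : IsPosDef A) (hB : IsPosDef B)
    (hC : IsPosDef C) : Rdist A C ≤ Rdist A B * Rdist B C := by
  obtain ⟨hBA, hAB⟩ := (Rdist_le_iff hA hB (Rdist_nonneg A B)).mp le_rfl
  obtain ⟨hCB, hBC⟩ := (Rdist_le_iff hB hC (Rdist_nonneg B C)).mp le_rfl
  refine (Rdist_le_iff hA hC (mul_nonneg (Rdist_nonneg A B) (Rdist_nonneg B C))).mpr ⟨?_, ?_⟩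
  · calc C ≤ Rdist B C • B := hCB
      _ ≤ Rdist B C • Rdist A B • A := smul_le_smul_of_nonneg_left hBA (Rdist_nonneg B C)
      _ = (Rdist A B * Rdist B C) • A := by rw [smul_smul, mul_comm]
  · calc A ≤ Rdist A B • B := hAB
      _ ≤ Rdist A B • Rdist B C • C := smul_le_smul_of_nonneg_left hBC (Rdist_nonneg A B)
      _ = (Rdist A B * Rdist B C) • C := smul_smul _ _ _
end

section
/- For positive definite operators A, B on a Hilbert space, ‖A − B‖ ≤ (R(A,B) − 1)·‖A‖, where R(A,B) = max{r(A⁻¹B), r(B⁻¹A)} and r denotes spectral radius. -/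
set_option synthInstance.maxHeartbeats 400000
set_option maxHeartbeats 800000

open scoped NNReal ENNReal
open ContinuousLinearMap Filter

variable {H : Type*} [NormedAddCommGroup H] [InnerProductSpace ℂ H] [CompleteSpace H]

/-!
Conjugating by `√A` turns `A⁻¹B` into the self-adjoint element `A^{-1/2} B A^{-1/2}`, whose
spectral radius is its norm; hence `B ≤ r(A⁻¹B) • A`, and symmetrically `A ≤ r(B⁻¹A) • B`.
For the larger radius `R` these Loewner inequalities force `R ≥ 1` and squeeze `A - B` between
`∓(R - 1) • A`, hence between `∓(R - 1)‖A‖`, which bounds the norm of the self-adjoint `A - B`.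
-/

open CFC

section OrderedModule

variable {M : Type*} [AddCommGroup M] [PartialOrder M] [IsOrderedAddMonoid M] [Module ℝ M]
  [PosSMulMono ℝ M]

lemma one_le_of_le_smul_self {a : M} (ha : 0 < a) {t : ℝ} (h : a ≤ t • a) : 1 ≤ t := by
  by_contra! ht
  have h₁ : 0 ≤ (t - 1) • a := by rwa [sub_smul, one_smul, sub_nonneg]
  have h₂ : (t - 1) • a ≤ 0 := smul_nonpos_of_nonpos_of_nonneg (by linarith) ha.le
  rcases smul_eq_zero.mp (le_antisymm h₂ h₁) with h | h
  · linarith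
  · exact ha.ne' h

lemma sub_le_smul_of_le_smul {a b : M} (ha : 0 ≤ a) {R : ℝ} (hR : 1 ≤ R) (h : a ≤ R • b) :
    a - b ≤ (R - 1) • a := by
  have hR₀ : 0 < R := by linarith
  have hb : R⁻¹ • a ≤ b := by
    simpa [smul_smul, inv_mul_cancel₀ hR₀.ne'] using
      smul_le_smul_of_nonneg_left h (inv_nonneg.2 hR₀.le)
  have hcoef : 1 - R⁻¹ ≤ R - 1 := by
    have : R⁻¹ ≤ 1 := inv_le_one_of_one_le₀ hR
    nlinarith [mul_inv_cancel₀ hR₀.ne']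
  calc a - b ≤ a - R⁻¹ • a := sub_le_sub_left hb a
    _ = (1 - R⁻¹) • a := by rw [sub_smul, one_smul]
    _ ≤ (R - 1) • a := smul_le_smul_of_nonneg_right hcoef ha

end OrderedModule

section CStarAlgebra

variable {𝒜 : Type*} [CStarAlgebra 𝒜] [PartialOrder 𝒜] [StarOrderedRing 𝒜]

lemma IsSelfAdjoint.norm_le_of_mem_Icc [Nontrivial 𝒜] {x : 𝒜} (hx : IsSelfAdjoint x) {c : ℝ}
    (h : x ∈ Set.Icc (-algebraMap ℝ 𝒜 c) (algebraMap ℝ 𝒜 c)) : ‖x‖ ≤ c := by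
  rw [← map_neg] at h
  rcases CStarAlgebra.norm_or_neg_norm_mem_spectrum hx with hmem | hmem
  · exact (le_algebraMap_iff_spectrum_le hx).mp h.2 _ hmem
  · linarith [(algebraMap_le_iff_le_spectrum hx).mp h.1 _ hmem]

lemma le_toReal_spectralRadius_inverse_mul_smul {a b : 𝒜} (ha : IsStrictlyPositive a)
    (hb : IsSelfAdjoint b) : b ≤ (spectralRadius ℂ (Ring.inverse a * b)).toReal • a := by
  obtain ⟨u, hu⟩ := ha.isUnit_cfcSqrt
  have hu_sa : IsSelfAdjoint (u : 𝒜) := hu ▸ .of_nonneg (sqrt_nonneg a)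
  have hu_inv_sa : IsSelfAdjoint (↑u⁻¹ : 𝒜) := by
    simpa [Ring.inverse_unit] using hu_sa.ringInverse
  have hsq : (u : 𝒜) * u = a := hu ▸ sqrt_mul_sqrt_self a ha.nonneg
  set c : 𝒜 := ↑u⁻¹ * b * ↑u⁻¹
  have hc : IsSelfAdjoint c := hb.conjugate_self hu_inv_sa
  have hconj : Ring.inverse a * b = ↑u⁻¹ * c * u := by
    rw [← hsq, ← Units.val_mul, Ring.inverse_unit]
    simp [c, mul_assoc]
  have hr : (spectralRadius ℂ (Ring.inverse a * b)).toReal = ‖c‖ := by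
    rw [hconj, spectralRadius, spectrum.units_conjugate', ← spectralRadius,
      hc.spectralRadius_eq_nnnorm]
    rfl
  calc b = u * c * u := by simp [c, mul_assoc]
    _ ≤ u * algebraMap ℝ 𝒜 ‖c‖ * u := hu_sa.conjugate_le_conjugate hc.le_algebraMap_norm_self
    _ = _ := by rw [hr, Algebra.algebraMap_eq_smul_one, mul_smul_comm, mul_one, smul_mul_assoc, hsq]

theorem norm_sub_le_of_isStrictlyPositive {a b : 𝒜} (ha : IsStrictlyPositive a)
    (hb : IsStrictlyPositive b) :
    ‖a - b‖ ≤ (max (spectralRadius ℂ (Ring.inverse a * b)).toReal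
      (spectralRadius ℂ (Ring.inverse b * a)).toReal - 1) * ‖a‖ := by
  nontriviality 𝒜
  set R := max (spectralRadius ℂ (Ring.inverse a * b)).toReal
    (spectralRadius ℂ (Ring.inverse b * a)).toReal
  have hba : b ≤ R • a := (le_toReal_spectralRadius_inverse_mul_smul ha hb.isSelfAdjoint).trans
    (smul_le_smul_of_nonneg_right (le_max_left _ _) ha.nonneg)
  have hab : a ≤ R • b := (le_toReal_spectralRadius_inverse_mul_smul hb ha.isSelfAdjoint).trans
    (smul_le_smul_of_nonneg_right (le_max_right _ _) hb.nonneg)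
  have hR : 1 ≤ R := by
    have hR₀ : 0 ≤ R := le_max_of_le_left ENNReal.toReal_nonneg
    have : 1 ≤ R * R := one_le_of_le_smul_self (ha.nonneg.lt_of_ne' ha.isUnit.ne_zero) <|
      hab.trans <| by simpa [smul_smul] using smul_le_smul_of_nonneg_left hba hR₀
    nlinarith
  have hbound : (R - 1) • a ≤ algebraMap ℝ 𝒜 ((R - 1) * ‖a‖) := by
    rw [map_mul, ← Algebra.smul_def]
    exact smul_le_smul_of_nonneg_left ha.isSelfAdjoint.le_algebraMap_norm_self (by linarith)
  refine (ha.isSelfAdjoint.sub hb.isSelfAdjoint).norm_le_of_mem_Icc ⟨?_, ?_⟩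
  · rw [neg_le, neg_sub]
    calc b - a ≤ R • a - a := sub_le_sub_right hba a
      _ = (R - 1) • a := by rw [sub_smul, one_smul]
      _ ≤ _ := hbound
  · exact (sub_le_smul_of_le_smul ha.nonneg hR hab).trans hbound

end CStarAlgebra

/-- `‖A - B‖ ≤ (R(A,B) - 1) * ‖A‖`. -/
theorem stmt_3 (A B : H →L[ℂ] H) (hA : IsPosDef A) (hB : IsPosDef B) :
    ‖A - B‖ ≤ (Rdist A B - 1) * ‖A‖ := by
  have hpos : ∀ {T : H →L[ℂ] H}, IsPosDef T → IsStrictlyPositive T :=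
    fun hT => ⟨(nonneg_iff_isPositive _).mpr hT.1, hT.2⟩
  exact norm_sub_le_of_isStrictlyPositive (hpos hA) (hpos hB)
end
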